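/- The set F of points of S having at least one vanishing homogeneous coordinate (that is, the set of fixed points of the generalized Fermat group H = ⟨φ_0, …, φ_n⟩ acting on S) is finite of cardinality exactly (n+1)·k^{n−1}. -/

import Mathlib

/-- A nonzero vector `x ∈ ℂ^{n+1}` satisfies the defining equations of the generalized
Fermat curve of type `(k,n)`: `lam i * x₀^k + x₁^k + x_{i+2}^k = 0` for `0 ≤ i ≤ n - 2`
(with `lam 0 = 1`). -/
def fermatEqns (n k : ℕ) (lam : ℕ → ℂ) (x : Fin (n + 1) → ℂ) : Prop :=
  ∀ i : ℕ, i ≤ n - 2 → lam i * x 0 ^ k + x 1 ^ k + x (Fin.ofNat (n + 1) (i + 2)) ^ k = 0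

/-!
Put `y = (x₀ᵏ, x₁ᵏ)`. The equations of `S` say `xₘᵏ = ℓₘ(y)` for the linear forms
`ℓ₀(a, b) = a`, `ℓ₁(a, b) = b`, `ℓᵢ₊₂(a, b) = -(λᵢ a + b)` on `ℂ²`, any two of which are linearly
independent. Hence a point of `S` has at most one vanishing coordinate. If `xⱼ = 0`, normalize by
`xₚ = 1` for some `p ≠ j`: then `y` is the unique `y₀` with `ℓⱼ(y₀) = 0`, `ℓₚ(y₀) = 1`, and
`ℓₘ(y₀) ≠ 0` for `m ≠ j`, so each of the other `n - 1` coordinates is one of the `k` roots of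
`xₘᵏ = ℓₘ(y₀)`.
-/

open Polynomial in
theorem Complex.ncard_setOf_pow_eq {k : ℕ} (hk : k ≠ 0) {c : ℂ} (hc : c ≠ 0) :
    {z : ℂ | z ^ k = c}.ncard = k := by
  have hprim := Complex.isPrimitiveRoot_exp k hk
  have hset : {z : ℂ | z ^ k = c} = nthRootsFinset k c := by
    ext z; simp [mem_nthRootsFinset (Nat.pos_of_ne_zero hk)]
  classical
  rw [hset, Set.ncard_coe_finset, nthRootsFinset_def,
    Multiset.toFinset_card_of_nodup (hprim.nthRoots_nodup hc), hprim.card_nthRoots,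
    if_pos (IsAlgClosed.exists_pow_nat_eq c (Nat.pos_of_ne_zero hk))]

section FermatCone

variable {ι : Type*} (ℓ : ι → ℂ × ℂ →ₗ[ℂ] ℂ) (k : ℕ)

def fermatCone : Set (ι → ℂ) := {x | ∃ y, ∀ m, x m ^ k = ℓ m y}

def fermatConeSlice (j p : ι) : Set (ι → ℂ) := {x | x ∈ fermatCone ℓ k ∧ x j = 0 ∧ x p = 1}

def fermatConeZeroLocus : Set (Projectivization ℂ (ι → ℂ)) :=
  {P | P.rep ∈ fermatCone ℓ k ∧ ∃ j, P.rep j = 0}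

variable {ℓ k}

theorem smul_mem_fermatCone {x : ι → ℂ} (hx : x ∈ fermatCone ℓ k) (c : ℂ) :
    c • x ∈ fermatCone ℓ k := by
  obtain ⟨y, hy⟩ := hx
  exact ⟨c ^ k • y, fun m => by simp [mul_pow, hy]⟩

theorem eq_of_mem_fermatCone_of_apply_eq_zero
    (hℓ : Pairwise fun m m' => Function.Injective ((ℓ m).prod (ℓ m'))) (hk : k ≠ 0)
    {x : ι → ℂ} (hx : x ∈ fermatCone ℓ k) (hx0 : x ≠ 0) {a b : ι} (ha : x a = 0)
    (hb : x b = 0) : a = b := by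
  by_contra hab
  obtain ⟨y, hy⟩ := hx
  have hy0 : y = 0 := (injective_iff_map_eq_zero _).mp (hℓ hab) y <| by
    simp [← hy, ha, hb, hk]
  exact hx0 <| funext fun m => pow_eq_zero_iff hk |>.mp <| by simp [hy, hy0]

theorem fermatConeSlice_eq_pi [DecidableEq ι]
    (hℓ : Pairwise fun m m' => Function.Injective ((ℓ m).prod (ℓ m'))) (hk : k ≠ 0)
    {j p : ι} (hjp : j ≠ p) {y : ℂ × ℂ} (hyj : ℓ j y = 0) (hyp : ℓ p y = 1) :
    fermatConeSlice ℓ k j p =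
      Set.univ.pi (Function.update (fun m => {z : ℂ | z ^ k = ℓ m y}) p {1}) := by
  ext x
  simp only [fermatConeSlice, fermatCone, Set.mem_ofPred_eq, Set.mem_pi, Set.mem_univ,
    true_implies]
  constructor
  · rintro ⟨⟨y', hy'⟩, hxj, hxp⟩ m
    obtain rfl : y' = y := hℓ hjp <| by simp [← hy', hxj, hxp, hyj, hyp, hk]
    rcases eq_or_ne m p with rfl | hmp
    · simpa using hxp
    · simpa [hmp] using hy' m
  · intro hx
    have hxp : x p = 1 := by simpa using hx p
    have hxm : ∀ m, x m ^ k = ℓ m y := fun m => by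
      rcases eq_or_ne m p with rfl | hmp
      · simp [hxp, hyp]
      · simpa [hmp] using hx m
    exact ⟨⟨y, hxm⟩, pow_eq_zero_iff hk |>.mp (by rw [hxm, hyj]), hxp⟩

theorem ncard_fermatConeSlice [Fintype ι]
    (hℓ : Pairwise fun m m' => Function.Injective ((ℓ m).prod (ℓ m'))) (hk : k ≠ 0)
    {j p : ι} (hjp : j ≠ p) :
    (fermatConeSlice ℓ k j p).ncard = k ^ (Fintype.card ι - 2) := by
  classical
  obtain ⟨y, hy⟩ := LinearMap.injective_iff_surjective.mp (hℓ hjp) (0, 1)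
  have hyj : ℓ j y = 0 := congrArg Prod.fst hy
  have hyp : ℓ p y = 1 := congrArg Prod.snd hy
  have hy_ne : ∀ m, m ≠ j → ℓ m y ≠ 0 := fun m hmj hm => by
    simp [(injective_iff_map_eq_zero _).mp (hℓ hmj) y (by simp [hm, hyj])] at hyp
  have hj : j ∈ ({p}ᶜ : Finset ι) := by simpa using hjp
  have hrest : ∀ m ∈ ({p}ᶜ : Finset ι).erase j,
      Nat.card (Function.update (fun m => {z : ℂ | z ^ k = ℓ m y}) p {1} m) = k := by
    intro m hm
    obtain ⟨hmj, hmp⟩ : m ≠ j ∧ m ≠ p := by simpa using hm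
    rw [Function.update_of_ne hmp, Nat.card_coe_set_eq,
      Complex.ncard_setOf_pow_eq hk (hy_ne m hmj)]
  rw [fermatConeSlice_eq_pi hℓ hk hjp hyj hyp, ← Nat.card_coe_set_eq,
    Nat.card_congr (Equiv.Set.univPi _), Nat.card_pi, Fintype.prod_eq_mul_prod_compl p,
    ← Finset.mul_prod_erase _ _ hj, Finset.prod_congr rfl hrest]
  simp [Function.update_of_ne hjp, hyj, hk, Finset.card_erase_of_mem hj, Finset.card_compl,
    Nat.sub_sub]

theorem ne_zero_of_mem_fermatConeSlice {j p : ι} {x : ι → ℂ} (hx : x ∈ fermatConeSlice ℓ k j p) :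
    x ≠ 0 := fun h => by simpa [h] using hx.2.2

theorem mk_mem_fermatConeZeroLocus {j p : ι} {x : ι → ℂ} (hx : x ∈ fermatConeSlice ℓ k j p) :
    Projectivization.mk ℂ x (ne_zero_of_mem_fermatConeSlice hx) ∈ fermatConeZeroLocus ℓ k := by
  obtain ⟨a, ha⟩ :=
    Projectivization.exists_smul_eq_mk_rep ℂ x (ne_zero_of_mem_fermatConeSlice hx)
  refine ⟨?_, j, ?_⟩ <;> rw [← ha, Units.smul_def]
  · exact smul_mem_fermatCone hx.1 _
  · simp [hx.2.1]

theorem ncard_fermatConeZeroLocus [Fintype ι] [Nontrivial ι]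
    (hℓ : Pairwise fun m m' => Function.Injective ((ℓ m).prod (ℓ m'))) (hk : k ≠ 0) :
    (fermatConeZeroLocus ℓ k).ncard = Fintype.card ι * k ^ (Fintype.card ι - 2) := by
  choose p hp using fun j : ι => exists_ne j
  have hslice : ∀ j, (fermatConeSlice ℓ k j (p j)).ncard = k ^ (Fintype.card ι - 2) :=
    fun j => ncard_fermatConeSlice hℓ hk (hp j).symm
  have : ∀ j, Finite (fermatConeSlice ℓ k j (p j)) := fun j =>
    (Set.finite_of_ncard_ne_zero (by rw [hslice]; exact pow_ne_zero _ hk)).to_subtype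
  -- A point is the class of exactly one `x` with `x j = 0`, `x (p j) = 1`: `j` is its only
  -- vanishing coordinate, and the normalization fixes the scalar.
  let f : (Σ j, fermatConeSlice ℓ k j (p j)) → fermatConeZeroLocus ℓ k := fun x =>
    ⟨Projectivization.mk ℂ x.2 (ne_zero_of_mem_fermatConeSlice x.2.2),
      mk_mem_fermatConeZeroLocus x.2.2⟩
  have hf : Function.Bijective f := by
    refine ⟨fun ⟨j, x, hx⟩ ⟨j', x', hx'⟩ hxx' => ?_, fun ⟨P, hP, j, hj⟩ => ?_⟩
    · obtain ⟨a, rfl⟩ :=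
        (Projectivization.mk_eq_mk_iff' ℂ _ _ _ _).mp (congrArg Subtype.val hxx')
      obtain rfl : j = j' := eq_of_mem_fermatCone_of_apply_eq_zero hℓ hk hx.1
        (ne_zero_of_mem_fermatConeSlice hx) hx.2.1 (by simp [hx'.2.1])
      obtain rfl : a = 1 := by simpa [hx'.2.2] using hx.2.2
      exact Sigma.subtype_ext rfl (one_smul ℂ x')
    · have hpj : P.rep (p j) ≠ 0 := fun h =>
        hp j (eq_of_mem_fermatCone_of_apply_eq_zero hℓ hk hP P.rep_nonzero h hj)
      refine ⟨⟨j, (P.rep (p j))⁻¹ • P.rep, smul_mem_fermatCone hP _, by simp [hj], by simp [hpj]⟩,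
        Subtype.ext ?_⟩
      exact ((Projectivization.mk_eq_mk_iff' ℂ _ _ _ P.rep_nonzero).mpr ⟨_, rfl⟩).trans P.mk_rep
  rw [← Nat.card_coe_set_eq, ← Nat.card_eq_of_bijective f hf, Nat.card_sigma]
  simp [Nat.card_coe_set_eq, hslice]

theorem fermatConeZeroLocus_finite [Fintype ι] [Nontrivial ι]
    (hℓ : Pairwise fun m m' => Function.Injective ((ℓ m).prod (ℓ m'))) (hk : k ≠ 0) :
    (fermatConeZeroLocus ℓ k).Finite :=
  Set.finite_of_ncard_ne_zero <| by
    rw [ncard_fermatConeZeroLocus hℓ hk]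
    exact mul_ne_zero Fintype.card_ne_zero (pow_ne_zero _ hk)

end FermatCone

/-- On `S`, `x m ^ k = fermatForm lam m (x 0 ^ k, x 1 ^ k)`. -/
def fermatForm (lam : ℕ → ℂ) : ℕ → ℂ × ℂ →ₗ[ℂ] ℂ
  | 0 => LinearMap.fst ℂ ℂ ℂ
  | 1 => LinearMap.snd ℂ ℂ ℂ
  | i + 2 => -(lam i • LinearMap.fst ℂ ℂ ℂ + LinearMap.snd ℂ ℂ ℂ)

section FermatForm

variable {N : ℕ} {lam : ℕ → ℂ}

@[simp]
theorem fermatForm_add_two_apply (i : ℕ) (y : ℂ × ℂ) :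
    fermatForm lam (i + 2) y = -(lam i * y.1 + y.2) :=
  rfl

theorem eq_zero_of_fermatForm_eq_zero (hlam_ne0 : ∀ i ≤ N, lam i ≠ 0)
    (hlam_inj : ∀ i j, i ≤ N → j ≤ N → lam i = lam j → i = j) {a b : ℕ} (hab : a < b)
    (hb : b ≤ N + 2) {y : ℂ × ℂ} (hya : fermatForm lam a y = 0) (hyb : fermatForm lam b y = 0) :
    y = 0 := by
  obtain ⟨u, v⟩ := y
  rcases a with _ | _ | i <;> rcases b with _ | _ | j <;> try omega
  · exact Prod.ext hya hyb
  · have hu : u = 0 := hya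
    exact Prod.ext hu (by simpa [hu] using hyb)
  · have hv : v = 0 := hya
    have hlam : lam j ≠ 0 := hlam_ne0 j (by omega)
    exact Prod.ext (by simpa [hv, hlam] using hyb) hv
  · have hi : -(lam i * u + v) = 0 := hya
    have hj : -(lam j * u + v) = 0 := hyb
    have hlam : lam i ≠ lam j := fun h => by have := hlam_inj i j (by omega) (by omega) h; omega
    have hu : u = 0 := by
      have : (lam i - lam j) * u = 0 := by linear_combination hj - hi
      simpa [sub_eq_zero, hlam] using this
    exact Prod.ext hu (by simpa [hu] using hi)

theorem fermatForm_pairwise_injective (hlam_ne0 : ∀ i ≤ N, lam i ≠ 0)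
    (hlam_inj : ∀ i j, i ≤ N → j ≤ N → lam i = lam j → i = j) :
    Pairwise fun m m' : Fin (N + 3) =>
      Function.Injective ((fermatForm lam m).prod (fermatForm lam m')) := by
  intro m m' hmm'
  refine (injective_iff_map_eq_zero _).mpr fun y hy => ?_
  simp only [LinearMap.prod_apply, Function.prod_apply, Prod.mk_eq_zero] at hy
  rcases lt_or_gt_of_ne (Fin.val_ne_of_ne hmm') with h | h
  · exact eq_zero_of_fermatForm_eq_zero hlam_ne0 hlam_inj h (by omega) hy.1 hy.2
  · exact eq_zero_of_fermatForm_eq_zero hlam_ne0 hlam_inj h (by omega) hy.2 hy.1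

theorem fermatEqns_iff_mem_fermatCone {k : ℕ} {x : Fin (N + 3) → ℂ} :
    fermatEqns (N + 2) k lam x ↔ x ∈ fermatCone (fun m : Fin (N + 3) => fermatForm lam m) k := by
  have hidx : ∀ i (hi : i ≤ N), Fin.ofNat (N + 3) (i + 2) = ⟨i + 2, by omega⟩ := fun i hi =>
    Fin.ext (Nat.mod_eq_of_lt (by omega))
  constructor
  · intro h
    refine ⟨(x 0 ^ k, x 1 ^ k), fun ⟨m, hm⟩ => ?_⟩
    rcases m with _ | _ | i
    · rfl
    · rfl
    · have := h i (by omega)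
      rw [hidx i (by omega)] at this
      rw [fermatForm_add_two_apply]
      linear_combination this
  · rintro ⟨y, hy⟩ i hi
    have h0 : x 0 ^ k = y.1 := hy 0
    have h1 : x 1 ^ k = y.2 := hy 1
    have h2 : x ⟨i + 2, by omega⟩ ^ k = -(lam i * y.1 + y.2) := hy ⟨i + 2, by omega⟩
    rw [hidx i (by omega)]
    linear_combination lam i * h0 + h1 + h2

end FermatForm

theorem stmt_11_general (k n : ℕ) (hk : 2 ≤ k) (hn : 2 ≤ n)
    (lam : ℕ → ℂ) (hlam0 : lam 0 = 1)
    (hlam_ne0 : ∀ i, 1 ≤ i → i ≤ n - 2 → lam i ≠ 0)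
    (hlam_inj : ∀ i j, i ≤ n - 2 → j ≤ n - 2 → lam i = lam j → i = j) :
    {p : Projectivization ℂ (Fin (n + 1) → ℂ) |
        fermatEqns n k lam p.rep ∧ ∃ j : Fin (n + 1), p.rep j = 0}.Finite ∧
    {p : Projectivization ℂ (Fin (n + 1) → ℂ) |
        fermatEqns n k lam p.rep ∧ ∃ j : Fin (n + 1), p.rep j = 0}.ncard =
      (n + 1) * k ^ (n - 1) := by
  obtain ⟨N, rfl⟩ : ∃ N, n = N + 2 := ⟨n - 2, by omega⟩
  have hlam : ∀ i ≤ N, lam i ≠ 0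
    | 0, _ => hlam0 ▸ one_ne_zero
    | i + 1, hi => hlam_ne0 (i + 1) (by omega) (by omega)
  have hℓ := fermatForm_pairwise_injective hlam fun i j hi hj => hlam_inj i j (by omega) (by omega)
  have hF : {P : Projectivization ℂ (Fin (N + 3) → ℂ) |
      fermatEqns (N + 2) k lam P.rep ∧ ∃ j, P.rep j = 0} =
        fermatConeZeroLocus (fun m : Fin (N + 3) => fermatForm lam m) k := by
    simp only [fermatEqns_iff_mem_fermatCone]
    rfl
  rw [hF, ncard_fermatConeZeroLocus hℓ (by omega), Fintype.card_fin]
  exact ⟨fermatConeZeroLocus_finite hℓ (by omega), rfl⟩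

/-- the set `F` of points of the generalized Fermat curve `S` of type
`(k,n)` having at least one vanishing homogeneous coordinate (the fixed point set of the
generalized Fermat group `H = ⟨φ₀, …, φₙ⟩`) is finite of cardinality `(n+1)·k^{n-1}`. -/
theorem stmt_11 (k n : ℕ) (hk : 2 ≤ k) (hn : 2 ≤ n)
    (lam : ℕ → ℂ) (hlam0 : lam 0 = 1)
    (hlam_ne0 : ∀ i, 1 ≤ i → i ≤ n - 2 → lam i ≠ 0)
    (hlam_ne1 : ∀ i, 1 ≤ i → i ≤ n - 2 → lam i ≠ 1)
    (hlam_inj : ∀ i j, i ≤ n - 2 → j ≤ n - 2 → lam i = lam j → i = j) :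
    {p : Projectivization ℂ (Fin (n + 1) → ℂ) |
        fermatEqns n k lam p.rep ∧ ∃ j : Fin (n + 1), p.rep j = 0}.Finite ∧
    {p : Projectivization ℂ (Fin (n + 1) → ℂ) |
        fermatEqns n k lam p.rep ∧ ∃ j : Fin (n + 1), p.rep j = 0}.ncard =
      (n + 1) * k ^ (n - 1) :=
  stmt_11_general k n hk hn lam hlam0 hlam_ne0 hlam_inj
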